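/- The generating function F(x) = Σ_n M_n^{(0)} x^n for Motzkin paths with no peaks (no occurrence of UD) satisfies x²F² − (1 − x + x²)F + 1 = 0; its coefficients begin 1, 1, 1, 2, 4, 8, 17, 37, 82, 185. -/

import Mathlib

inductive Step : Type
  | U | F | D
  deriving DecidableEq

instance : Fintype Step :=
  ⟨⟨{Step.U, Step.F, Step.D}, by decide⟩, fun x => by cases x <;> decide⟩

def stepVal : Step → ℤ
  | .U => 1
  | .F => 0
  | .D => -1

/-- Height of the path after the first `i` steps. -/
def ht (p : List Step) (i : ℕ) : ℤ := ((p.take i).map stepVal).sum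

/-- A Motzkin path: starts and ends at height 0 and stays nonnegative. -/
def IsMotzkin (p : List Step) : Prop :=
  ht p p.length = 0 ∧ ∀ i ≤ p.length, 0 ≤ ht p i

instance : DecidablePred IsMotzkin := fun p => by
  unfold IsMotzkin; infer_instance

/-- Number of ascents: maximal runs of up steps (counted at their last up step). -/
def asc (p : List Step) : ℕ :=
  ((List.range p.length).filter
    (fun i => p[i]? == some Step.U && p[i+1]? != some Step.U)).length

/-- Number of occurrences of `w` as a consecutive subword of `p`. -/
def countSubword (w p : List Step) : ℕ :=
  ((List.range p.length).filter (fun i => w.isPrefixOf (p.drop i))).length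

/-- Number of plateaus: occurrences of a subword U F^k D for some k ≥ 0. -/
def plt (p : List Step) : ℕ :=
  ((List.range p.length).filter (fun i =>
    (List.range p.length).any (fun k =>
      (Step.U :: (List.replicate k Step.F ++ [Step.D])).isPrefixOf (p.drop i)))).length
/-- Number of peakless Motzkin paths (no occurrence of UD) of length n. -/
noncomputable def peakless (n : ℕ) : ℕ :=
  Nat.card {p : List Step // p.length = n ∧ IsMotzkin p ∧
    countSubword [Step.U, Step.D] p = 0}

/-- Their generating function F(x) = Σ_n peakless n · xⁿ. -/
noncomputable def Fpeakless : PowerSeries ℚ :=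
  PowerSeries.mk fun n => (peakless n : ℚ)

/-!
Every nonempty Motzkin path factors uniquely at its first return to the axis as either `F p` or
`U q D r` with Motzkin paths `q`, `r`. In the second case the path is peakless iff `q`, `r` are
peakless and `q` is nonempty: a Motzkin path neither starts with `D` nor ends with `U`, so no peak
can straddle the junctions. Hence `F = 1 + x F + x² (F - 1) F`, which is the quadratic equation,
and the coefficient recurrence gives the initial values.
-/

namespace List

variable {α : Type*}

theorem pair_infix_cons_iff {a b c : α} {l : List α} :
    [a, b] <:+: c :: l ↔ (a = c ∧ l.head? = some b) ∨ [a, b] <:+: l := by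
  rw [infix_cons_iff, cons_prefix_cons]
  cases l <;> simp [@eq_comm _ _ b]

theorem pair_infix_append_iff {a b : α} {xs ys : List α} :
    [a, b] <:+: xs ++ ys ↔
      [a, b] <:+: xs ∨ [a, b] <:+: ys ∨ (xs.getLast? = some a ∧ ys.head? = some b) := by
  induction xs with
  | nil => simp
  | cons c xs ih =>
    rw [cons_append, pair_infix_cons_iff, ih, pair_infix_cons_iff]
    cases xs <;> simp [getLast?_cons_cons] <;> tauto

theorem infix_iff_exists_prefix_drop {w l : List α} (hw : w ≠ []) :
    w <:+: l ↔ ∃ i < l.length, w <+: l.drop i := by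
  refine ⟨fun h => ?_, fun ⟨i, _, hi⟩ => hi.isInfix.trans (drop_suffix i l).isInfix⟩
  obtain ⟨t, hwt, htl⟩ := infix_iff_prefix_suffix.mp h
  have ht : 0 < t.length := length_pos_iff.mpr (ne_nil_of_length_pos
    (lt_of_lt_of_le (length_pos_iff.mpr hw) hwt.length_le))
  refine ⟨l.length - t.length, by have := htl.length_le; omega, ?_⟩
  rwa [← suffix_iff_eq_drop.mp htl]

theorem prefix_append_iff {s xs ys : List α} :
    s <+: xs ++ ys ↔ s <+: xs ∨ ∃ s', s = xs ++ s' ∧ s' <+: ys := by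
  simp only [prefix_iff_exists_append_eq, append_eq_append_iff]
  constructor
  · rintro ⟨t, ⟨a, rfl, rfl⟩ | ⟨c, rfl, rfl⟩⟩
    · exact .inl ⟨a, rfl⟩
    · exact .inr ⟨c, rfl, t, rfl⟩
  · rintro (⟨a, rfl⟩ | ⟨s', rfl, t, rfl⟩)
    · exact ⟨a ++ ys, by simp⟩
    · exact ⟨t, by simp⟩

end List

open Step

theorem countSubword_eq_zero_iff {w p : List Step} (hw : w ≠ []) :
    countSubword w p = 0 ↔ ¬ w <:+: p := by
  simp [countSubword, List.infix_iff_exists_prefix_drop hw]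

def height (p : List Step) : ℤ := (p.map stepVal).sum

@[simp] theorem height_nil : height [] = 0 := rfl

@[simp] theorem height_cons (a : Step) (p : List Step) :
    height (a :: p) = stepVal a + height p := List.sum_cons

@[simp] theorem height_append (p q : List Step) : height (p ++ q) = height p + height q := by
  simp [height]

theorem isMotzkin_iff {p : List Step} :
    IsMotzkin p ↔ height p = 0 ∧ ∀ q, q <+: p → 0 ≤ height q := by
  refine and_congr (by rw [ht, List.take_length, height]) ⟨fun h q hq => ?_, fun h i _ => ?_⟩
  · rw [List.prefix_iff_eq_take.mp hq]
    exact h _ hq.length_le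
  · exact h _ (List.take_prefix i p)

theorem isMotzkin_F_cons_iff {p : List Step} : IsMotzkin (F :: p) ↔ IsMotzkin p := by
  simp only [isMotzkin_iff, List.prefix_cons_iff, height_cons, stepVal, zero_add]
  refine and_congr_right fun _ =>
    ⟨fun h q hq => by simpa [stepVal] using h (F :: q) (.inr ⟨q, rfl, hq⟩), ?_⟩
  rintro h q (rfl | ⟨q, rfl, hq⟩)
  · rfl
  · simpa [stepVal] using h q hq

theorem not_isMotzkin_D_cons (p : List Step) : ¬ IsMotzkin (D :: p) := fun h => by
  simpa [stepVal] using (isMotzkin_iff.mp h).2 [D] (by simp)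

theorem IsMotzkin.head?_ne_D {p : List Step} (h : IsMotzkin p) : p.head? ≠ some D := by
  cases p with
  | nil => simp
  | cons a p => rintro ⟨⟩; exact not_isMotzkin_D_cons p h

theorem IsMotzkin.getLast?_ne_U {p : List Step} (h : IsMotzkin p) : p.getLast? ≠ some U := by
  intro hU
  obtain ⟨q, rfl⟩ := List.getLast?_eq_some_iff.mp hU
  obtain ⟨h0, hpre⟩ := isMotzkin_iff.mp h
  have := hpre q (List.prefix_append q [U])
  simp [stepVal] at h0
  omega

theorem exists_first_descent {t s : List Step} (hs : s <+: t) (hneg : height s < 0) :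
    ∃ q r, t = q ++ D :: r ∧ IsMotzkin q := by
  induction t using List.reverseRecOn generalizing s with
  | nil => simp [List.prefix_nil.mp hs] at hneg
  | append_singleton t a ih =>
    by_cases hdip : ∃ s, s <+: t ∧ height s < 0
    · obtain ⟨s, hs, hneg⟩ := hdip
      obtain ⟨q, r, rfl, hq⟩ := ih hs hneg
      exact ⟨q, r ++ [a], by simp, hq⟩
    push Not at hdip
    rcases List.prefix_concat_iff.mp hs with rfl | hs
    · have ht := hdip t List.prefix_rfl
      have ha : a = D := by cases a <;> simp [stepVal] at hneg ⊢ <;> omega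
      subst ha
      exact ⟨t, [], rfl, isMotzkin_iff.mpr ⟨by simp [stepVal] at hneg; omega, hdip⟩⟩
    · exact absurd hneg (hdip s hs).not_gt

theorem isMotzkin_U_cons_iff {t : List Step} :
    IsMotzkin (U :: t) ↔ ∃ q r, t = q ++ D :: r ∧ IsMotzkin q ∧ IsMotzkin r := by
  constructor
  · intro h
    obtain ⟨h0, hpre⟩ := isMotzkin_iff.mp h
    have hpre' : ∀ s, s <+: t → -1 ≤ height s := fun s hs => by
      have := hpre (U :: s) (List.cons_prefix_cons.mpr ⟨rfl, hs⟩)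
      simp [stepVal] at this
      omega
    simp only [height_cons, stepVal] at h0
    obtain ⟨q, r, rfl, hq⟩ := exists_first_descent List.prefix_rfl (by omega : height t < 0)
    have hq0 := (isMotzkin_iff.mp hq).1
    refine ⟨q, r, rfl, hq, isMotzkin_iff.mpr ⟨by simp [stepVal] at h0; omega, fun s hs => ?_⟩⟩
    have := hpre' (q ++ D :: s) (by simpa using hs)
    simp [stepVal] at this
    omega
  · rintro ⟨q, r, rfl, hq, hr⟩
    obtain ⟨hq0, hqpre⟩ := isMotzkin_iff.mp hq
    obtain ⟨hr0, hrpre⟩ := isMotzkin_iff.mp hr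
    refine isMotzkin_iff.mpr ⟨by simp [stepVal, hq0, hr0], fun s hs => ?_⟩
    rcases List.prefix_cons_iff.mp hs with rfl | ⟨s₁, rfl, hs₁⟩
    · rfl
    rcases List.prefix_append_iff.mp hs₁ with hs₁ | ⟨s₂, rfl, hs₂⟩
    · have := hqpre s₁ hs₁
      simp [stepVal]
      omega
    rcases List.prefix_cons_iff.mp hs₂ with rfl | ⟨s₃, rfl, hs₃⟩
    · simp [stepVal, hq0]
    · simpa [stepVal, hq0] using hrpre s₃ hs₃

theorem IsMotzkin.length_le_of_append_D_eq {q q' r r' : List Step} (hq : IsMotzkin q)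
    (hq' : IsMotzkin q') (h : q ++ D :: r = q' ++ D :: r') : q.length ≤ q'.length := by
  by_contra! hlt
  have hpre : q' ++ [D] <+: q := List.prefix_of_prefix_length_le
    ⟨r', by rw [List.append_assoc, h]; rfl⟩ (List.prefix_append q _) (by simpa using hlt)
  have := (isMotzkin_iff.mp hq).2 _ hpre
  simp [stepVal, (isMotzkin_iff.mp hq').1] at this

theorem append_D_cons_inj {q q' r r' : List Step} (hq : IsMotzkin q) (hq' : IsMotzkin q')
    (h : q ++ D :: r = q' ++ D :: r') : q = q' ∧ r = r' := by
  have hlen := le_antisymm (hq.length_le_of_append_D_eq hq' h)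
    (hq'.length_le_of_append_D_eq hq h.symm)
  obtain ⟨rfl, hr⟩ := List.append_inj h hlen
  exact ⟨rfl, List.cons_injective hr⟩

def HasPeak (p : List Step) : Prop := [U, D] <:+: p

theorem hasPeak_F_cons_iff {p : List Step} : HasPeak (F :: p) ↔ HasPeak p := by
  simp [HasPeak, List.pair_infix_cons_iff]

theorem hasPeak_arch_iff {q r : List Step} (hq : IsMotzkin q) :
    HasPeak (U :: (q ++ D :: r)) ↔ q = [] ∨ HasPeak q ∨ HasPeak r := by
  have hhead := hq.head?_ne_D
  have hlast := hq.getLast?_ne_U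
  simp only [HasPeak, List.pair_infix_append_iff, List.pair_infix_cons_iff]
  cases q <;> simp_all [List.getLast?_cons]

open Finset

def peaklessPaths (n : ℕ) : Finset (List Step) :=
  ((univ : Finset (List.Vector Step n)).map
      ⟨List.Vector.toList, List.Vector.toList_injective⟩).filter
    fun p => IsMotzkin p ∧ countSubword [U, D] p = 0

theorem mem_peaklessPaths {n : ℕ} {p : List Step} :
    p ∈ peaklessPaths n ↔ p.length = n ∧ IsMotzkin p ∧ ¬ HasPeak p := by
  have hvec : (∃ v : List.Vector Step n, v.toList = p) ↔ p.length = n :=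
    ⟨fun ⟨v, hv⟩ => hv ▸ v.toList_length, fun h => ⟨⟨p, h⟩, rfl⟩⟩
  simp [peaklessPaths, hvec, countSubword_eq_zero_iff, HasPeak]

theorem peakless_eq_card (n : ℕ) : peakless n = #(peaklessPaths n) := by
  rw [peakless, ← Nat.card_eq_finsetCard]
  exact Nat.card_congr (Equiv.subtypeEquivRight fun p => by
    rw [mem_peaklessPaths, countSubword_eq_zero_iff (List.cons_ne_nil _ _), HasPeak])

theorem peaklessPaths_add_two (n : ℕ) :
    peaklessPaths (n + 2) = (peaklessPaths (n + 1)).map ⟨(F :: ·), List.cons_injective⟩ ∪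
      (((antidiagonal n).filter (·.1 ≠ 0)).sigma
        fun ij => peaklessPaths ij.1 ×ˢ peaklessPaths ij.2).image
          fun x => U :: (x.2.1 ++ D :: x.2.2) := by
  ext p
  simp only [mem_union, mem_map, mem_image, mem_sigma, mem_filter,
    HasAntidiagonal.mem_antidiagonal, mem_product, mem_peaklessPaths, Function.Embedding.coeFn_mk,
    Sigma.exists, Prod.exists]
  constructor
  · rintro ⟨hlen, hM, hP⟩
    obtain ⟨a, t, rfl⟩ := List.exists_cons_of_length_eq_add_one hlen
    cases a with
    | U =>
      obtain ⟨q, r, rfl, hq, hr⟩ := isMotzkin_U_cons_iff.mp hM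
      rw [hasPeak_arch_iff hq, not_or, not_or, ← List.length_eq_zero_iff] at hP
      refine .inr ⟨q.length, r.length, q, r,
        ⟨⟨?_, hP.1⟩, ⟨rfl, hq, hP.2.1⟩, rfl, hr, hP.2.2⟩, rfl⟩
      simp at hlen
      omega
    | F =>
      rw [isMotzkin_F_cons_iff, hasPeak_F_cons_iff] at *
      exact .inl ⟨t, ⟨by simpa using hlen, hM, hP⟩, rfl⟩
    | D => exact absurd hM (not_isMotzkin_D_cons t)
  · rintro (⟨t, ⟨ht, hM, hP⟩, rfl⟩ |
      ⟨i, j, q, r, ⟨⟨hij, hi⟩, ⟨rfl, hqM, hqP⟩, rfl, hrM, hrP⟩, rfl⟩)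
    · exact ⟨by simp [ht], isMotzkin_F_cons_iff.mpr hM, hasPeak_F_cons_iff.not.mpr hP⟩
    · refine ⟨by simp; omega, isMotzkin_U_cons_iff.mpr ⟨q, r, rfl, hqM, hrM⟩, ?_⟩
      rw [hasPeak_arch_iff hqM, ← List.length_eq_zero_iff]
      tauto

theorem card_peaklessPaths_add_two (n : ℕ) :
    #(peaklessPaths (n + 2)) = #(peaklessPaths (n + 1)) +
      ∑ ij ∈ (antidiagonal n).filter (·.1 ≠ 0), #(peaklessPaths ij.1) * #(peaklessPaths ij.2) := by
  rw [peaklessPaths_add_two, card_union_of_disjoint, card_map, card_image_of_injOn, card_sigma]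
  · simp only [card_product]
  · rintro ⟨⟨i, j⟩, q, r⟩ hx ⟨⟨i', j'⟩, q', r'⟩ hx' h
    simp only [coe_sigma, Set.mem_sigma_iff, mem_coe, mem_product, mem_peaklessPaths] at hx hx'
    obtain ⟨-, ⟨rfl, hq, -⟩, rfl, -⟩ := hx
    obtain ⟨-, ⟨rfl, hq', -⟩, rfl, -⟩ := hx'
    obtain ⟨rfl, rfl⟩ := append_D_cons_inj hq hq' (List.cons_injective h)
    rfl
  · simp [disjoint_left]

theorem peakless_zero : peakless 0 = 1 := by
  rw [peakless_eq_card]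
  decide

theorem peakless_one : peakless 1 = 1 := by
  rw [peakless_eq_card]
  decide

theorem peakless_add_two (n : ℕ) :
    peakless (n + 2) = peakless (n + 1) +
      ∑ ij ∈ (antidiagonal n).filter (·.1 ≠ 0), peakless ij.1 * peakless ij.2 := by
  simp only [peakless_eq_card]
  exact card_peaklessPaths_add_two n

open PowerSeries

theorem coeff_Fpeakless_sub_one (n : ℕ) :
    coeff n (Fpeakless - 1) = if n = 0 then 0 else (peakless n : ℚ) := by
  rcases n with _ | n <;> simp [Fpeakless, peakless_zero]

theorem Fpeakless_eq : Fpeakless = 1 + X * Fpeakless + X ^ 2 * ((Fpeakless - 1) * Fpeakless) := by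
  ext (_ | _ | n)
  · simp [Fpeakless, peakless_zero]
  · simp [Fpeakless, peakless_zero, peakless_one, coeff_X_pow_mul']
  · rw [map_add, map_add, coeff_succ_X_mul, coeff_X_pow_mul', if_pos (by omega), coeff_mul]
    simp only [coeff_Fpeakless_sub_one]
    simp [Fpeakless, peakless_add_two, sum_filter]

/-- F satisfies x²F² − (1 − x + x²)F + 1 = 0, and its coefficients begin
1, 1, 1, 2, 4, 8, 17, 37, 82, 185. -/
theorem peakless_gf :
    (PowerSeries.X ^ 2 * Fpeakless ^ 2
        - (1 - PowerSeries.X + PowerSeries.X ^ 2) * Fpeakless + 1 = 0)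
      ∧ peakless 0 = 1 ∧ peakless 1 = 1 ∧ peakless 2 = 1 ∧ peakless 3 = 2
      ∧ peakless 4 = 4 ∧ peakless 5 = 8 ∧ peakless 6 = 17 ∧ peakless 7 = 37
      ∧ peakless 8 = 82 ∧ peakless 9 = 185 := by
  refine ⟨by linear_combination -Fpeakless_eq, peakless_zero, peakless_one, ?_⟩
  simp [peakless_add_two, sum_filter, Nat.sum_antidiagonal_succ, peakless_zero, peakless_one]
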